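/- Let F be a Finsler structure on U, g̃ a Riemannian metric on U, and set F̃²(x,y) := g̃_{ij}(x) y^i y^j and b := F² − F̃². If δ̃_k b = 0 on U × (ℝⁿ∖{0}) for every k, then (F²)_{||k} = 0 for every k, B^i = 0 and G^i = G̃^i for every i, and consequently the tension of the identity map, τ^i := g^{jk}( γ̃^i_{jk} − G^i_{jk} ), vanishes identically; i.e., the identity map id : (U,g) → (U,g̃) is harmonic. -/

import Mathlib

noncomputable section

open scoped BigOperators
open scoped ContDiff

/-- Partial derivative of a function on `Fin k → ℝ` in the `i`-th coordinate direction. -/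
def pd {k : ℕ} {E : Type*} [NormedAddCommGroup E] [NormedSpace ℝ E]
    (f : (Fin k → ℝ) → E) (i : Fin k) (x : Fin k → ℝ) : E :=
  fderiv ℝ f x (Pi.single i 1)

/-- The fundamental tensor `g_{ij}(x,y) = (1/2) ∂²(F²)/∂y^i∂y^j` of a Finsler function. -/
def gF {n : ℕ} (F : (Fin n → ℝ) → (Fin n → ℝ) → ℝ) (i j : Fin n)
    (x y : Fin n → ℝ) : ℝ :=
  (1 / 2) * pd (fun y' => pd (fun y'' => (F x y'') ^ 2) j y') i y

/-- The fundamental tensor as a matrix. -/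
def gMat {n : ℕ} (F : (Fin n → ℝ) → (Fin n → ℝ) → ℝ) (x y : Fin n → ℝ) :
    Matrix (Fin n) (Fin n) ℝ :=
  Matrix.of fun i j => gF F i j x y

/-- The inverse fundamental tensor `g^{ij}`. -/
def gInv {n : ℕ} (F : (Fin n → ℝ) → (Fin n → ℝ) → ℝ) (i j : Fin n)
    (x y : Fin n → ℝ) : ℝ :=
  (gMat F x y)⁻¹ i j

/-- `y_h := (1/2) ∂(F²)/∂y^h`. -/
def yLow {n : ℕ} (F : (Fin n → ℝ) → (Fin n → ℝ) → ℝ) (h : Fin n)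
    (x y : Fin n → ℝ) : ℝ :=
  (1 / 2) * pd (fun y' => (F x y') ^ 2) h y

/-- A Finsler structure on an open set `U ⊆ ℝⁿ`, in coordinates. -/
structure IsFinsler {n : ℕ} (U : Set (Fin n → ℝ))
    (F : (Fin n → ℝ) → (Fin n → ℝ) → ℝ) : Prop where
  isOpen : IsOpen U
  cont : ContinuousOn (fun p : (Fin n → ℝ) × (Fin n → ℝ) => F p.1 p.2) (U ×ˢ Set.univ)
  smooth : ContDiffOn ℝ (⊤ : ℕ∞) (fun p : (Fin n → ℝ) × (Fin n → ℝ) => F p.1 p.2)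
    (U ×ˢ {y | y ≠ 0})
  homog : ∀ x ∈ U, ∀ y : Fin n → ℝ, ∀ l : ℝ, 0 < l → F x (l • y) = l * F x y
  posdef : ∀ x ∈ U, ∀ y : Fin n → ℝ, y ≠ 0 → (gMat F x y).PosDef

/-- The spray coefficients `G^i` of a Finsler structure:
`2G^i = (1/2) g^{ih}( ∂²(F²)/∂y^h∂x^k · y^k − ∂(F²)/∂x^h )`. -/
def spray {n : ℕ} (F : (Fin n → ℝ) → (Fin n → ℝ) → ℝ) (i : Fin n)
    (x y : Fin n → ℝ) : ℝ :=
  (1 / 4) * ∑ h, gInv F i h x y *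
    ((∑ k, pd (fun x' => pd (fun y' => (F x' y') ^ 2) h y) k x * y k)
      - pd (fun x' => (F x' y) ^ 2) h x)

/-- The Cartan nonlinear connection `G^i_j := ∂G^i/∂y^j`. -/
def nCart {n : ℕ} (F : (Fin n → ℝ) → (Fin n → ℝ) → ℝ) (i j : Fin n)
    (x y : Fin n → ℝ) : ℝ :=
  pd (fun y' => spray F i x y') j y

/-- The adapted (horizontal) derivation `δ_i := ∂/∂x^i − G^j_i ∂/∂y^j` acting on
functions of `(x,y)`. -/
def hder {n : ℕ} (F : (Fin n → ℝ) → (Fin n → ℝ) → ℝ) (i : Fin n)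
    (f : (Fin n → ℝ) → (Fin n → ℝ) → ℝ) (x y : Fin n → ℝ) : ℝ :=
  pd (fun x' => f x' y) i x - ∑ j, nCart F j i x y * pd (fun y' => f x y') j y

/-- The Chern–Rund connection coefficients
`Γ^i_{jk} := (1/2) g^{ih}( δ_k g_{hj} + δ_j g_{hk} − δ_h g_{jk} )`. -/
def chern {n : ℕ} (F : (Fin n → ℝ) → (Fin n → ℝ) → ℝ) (i j k : Fin n)
    (x y : Fin n → ℝ) : ℝ :=
  (1 / 2) * ∑ h, gInv F i h x y *
    (hder F k (gF F h j) x y + hder F j (gF F h k) x y - hder F h (gF F j k) x y)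

/-- `G^i_{jk} := ∂²G^i/∂y^j∂y^k`. -/
def sprayH {n : ℕ} (F : (Fin n → ℝ) → (Fin n → ℝ) → ℝ) (i j k : Fin n)
    (x y : Fin n → ℝ) : ℝ :=
  pd (fun y' => pd (fun y'' => spray F i x y'') k y') j y

/-- The torsion trace `P_i := P^j_{ij} = G^j_{ij} − Γ^j_{ij}`. -/
def pOne {n : ℕ} (F : (Fin n → ℝ) → (Fin n → ℝ) → ℝ) (i : Fin n)
    (x y : Fin n → ℝ) : ℝ :=
  ∑ j, (sprayH F j i j x y - chern F j i j x y)
/-- A Riemannian metric on an open set of `ℝ^m`, in coordinates. -/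
structure IsRiemann {m : ℕ} (Ut : Set (Fin m → ℝ))
    (gt : (Fin m → ℝ) → Matrix (Fin m) (Fin m) ℝ) : Prop where
  isOpen : IsOpen Ut
  smooth : ∀ i j, ContDiffOn ℝ (⊤ : ℕ∞) (fun x => gt x i j) Ut
  symm : ∀ x ∈ Ut, (gt x).IsSymm
  posdef : ∀ x ∈ Ut, (gt x).PosDef

/-- The Christoffel symbols `γ̃^i_{jk}` of a Riemannian metric in coordinates. -/
def christ {m : ℕ} (gt : (Fin m → ℝ) → Matrix (Fin m) (Fin m) ℝ)
    (i j k : Fin m) (x : Fin m → ℝ) : ℝ :=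
  (1 / 2) * ∑ h, (gt x)⁻¹ i h *
    (pd (fun x' => gt x' h j) k x + pd (fun x' => gt x' h k) j x
      - pd (fun x' => gt x' j k) h x)
/-- The horizontal derivation `δ̃_j := ∂/∂x^j − γ̃^k_{jl} y^l ∂/∂y^k` of a Riemannian
metric, acting on functions of `(x,y)`; `f_{||j} := δ̃_j f`. -/
def rhder {n : ℕ} (gt : (Fin n → ℝ) → Matrix (Fin n) (Fin n) ℝ) (j : Fin n)
    (f : (Fin n → ℝ) → (Fin n → ℝ) → ℝ) (x y : Fin n → ℝ) : ℝ :=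
  pd (fun x' => f x' y) j x
    - ∑ k, (∑ l, christ gt k j l x * y l) * pd (fun y' => f x y') k y
/-- `y_{h||j} := δ̃_j y_h − γ̃^l_{hj} y_l`. -/
def yLowCov {n : ℕ} (F : (Fin n → ℝ) → (Fin n → ℝ) → ℝ)
    (gt : (Fin n → ℝ) → Matrix (Fin n) (Fin n) ℝ) (h j : Fin n)
    (x y : Fin n → ℝ) : ℝ :=
  rhder gt j (yLow F h) x y - ∑ l, christ gt l h j x * yLow F l x y

/-- `G̃^i(x,y) := (1/2) γ̃^i_{jk}(x) y^j y^k`. -/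
def gTildeSpray {n : ℕ} (gt : (Fin n → ℝ) → Matrix (Fin n) (Fin n) ℝ) (i : Fin n)
    (x y : Fin n → ℝ) : ℝ :=
  (1 / 2) * ∑ j, ∑ k, christ gt i j k x * y j * y k

/-- `B^i`, defined by `2B^i := (1/2) g^{ih}( 2 y_{h||j} y^j − (F²)_{||h} )`. -/
def bCoef {n : ℕ} (F : (Fin n → ℝ) → (Fin n → ℝ) → ℝ)
    (gt : (Fin n → ℝ) → Matrix (Fin n) (Fin n) ℝ) (i : Fin n)
    (x y : Fin n → ℝ) : ℝ :=
  (1 / 4) * ∑ h, gInv F i h x y *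
    (2 * (∑ j, yLowCov F gt h j x y * y j)
      - rhder gt h (fun a b => (F a b) ^ 2) x y)

theorem HasFDerivAt.pd_eq {k : ℕ} {f : (Fin k → ℝ) → ℝ} {L : (Fin k → ℝ) →L[ℝ] ℝ}
    {x : Fin k → ℝ} (h : HasFDerivAt f L x) (i : Fin k) :
    pd f i x = L (Pi.single i 1) := by
  rw [pd, h.fderiv]

theorem pd_congr {k : ℕ} {f g : (Fin k → ℝ) → ℝ} {x : Fin k → ℝ} (h : f =ᶠ[nhds x] g)
    (i : Fin k) : pd f i x = pd g i x := by
  rw [pd, pd, h.fderiv_eq]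

theorem pd_slice_left {k : ℕ} {f : ((Fin k → ℝ) × (Fin k → ℝ)) → ℝ} {x y : Fin k → ℝ}
    (h : DifferentiableAt ℝ f (x, y)) (i : Fin k) :
    pd (fun x' => f (x', y)) i x = fderiv ℝ f (x, y) (Pi.single i 1, 0) :=
  (h.hasFDerivAt.comp x (hasFDerivAt_prodMk_left (𝕜 := ℝ) x y)).pd_eq i

theorem pd_slice_right {k : ℕ} {f : ((Fin k → ℝ) × (Fin k → ℝ)) → ℝ} {x y : Fin k → ℝ}
    (h : DifferentiableAt ℝ f (x, y)) (i : Fin k) :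
    pd (fun y' => f (x, y')) i y = fderiv ℝ f (x, y) (0, Pi.single i 1) :=
  (h.hasFDerivAt.comp y (hasFDerivAt_prodMk_right x y)).pd_eq i

section Second
variable {k : ℕ} {f : ((Fin k → ℝ) × (Fin k → ℝ)) → ℝ} {S : Set ((Fin k → ℝ) × (Fin k → ℝ))}
  {x y : Fin k → ℝ}

theorem pd_f1_left (h : DifferentiableAt ℝ (fderiv ℝ f) (x, y))
    (v : (Fin k → ℝ) × (Fin k → ℝ)) (i : Fin k) :
    pd (fun x' => fderiv ℝ f (x', y) v) i x
      = fderiv ℝ (fderiv ℝ f) (x, y) (Pi.single i 1, 0) v := by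
  have h1 := h.hasFDerivAt.comp x (hasFDerivAt_prodMk_left (𝕜 := ℝ) x y)
  have h2 := (ContinuousLinearMap.apply ℝ ℝ v).hasFDerivAt.comp x h1
  exact h2.pd_eq i

theorem pd_f1_right (h : DifferentiableAt ℝ (fderiv ℝ f) (x, y))
    (v : (Fin k → ℝ) × (Fin k → ℝ)) (i : Fin k) :
    pd (fun y' => fderiv ℝ f (x, y') v) i y
      = fderiv ℝ (fderiv ℝ f) (x, y) (0, Pi.single i 1) v := by
  have h1 := h.hasFDerivAt.comp y (hasFDerivAt_prodMk_right x y)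
  have h2 := (ContinuousLinearMap.apply ℝ ℝ v).hasFDerivAt.comp y h1
  exact h2.pd_eq i

theorem f2_symm (hS : IsOpen S) (hp : (x, y) ∈ S)
    (hf : ∀ q ∈ S, DifferentiableAt ℝ f q)
    (hf1 : DifferentiableAt ℝ (fderiv ℝ f) (x, y))
    (v w : (Fin k → ℝ) × (Fin k → ℝ)) :
    fderiv ℝ (fderiv ℝ f) (x, y) v w = fderiv ℝ (fderiv ℝ f) (x, y) w v := by
  refine second_derivative_symmetric_of_eventually_of_real (f := f) ?_ hf1.hasFDerivAt v w
  filter_upwards [hS.mem_nhds hp] with q hq using (hf q hq).hasFDerivAt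

-- the patterns occurring in definitions
theorem pd_pd_xy (hS : IsOpen S) (hp : (x, y) ∈ S)
    (hf : ∀ q ∈ S, DifferentiableAt ℝ f q)
    (hf1 : DifferentiableAt ℝ (fderiv ℝ f) (x, y)) (i j : Fin k) :
    pd (fun x' => pd (fun y'' => f (x', y'')) j y) i x
      = fderiv ℝ (fderiv ℝ f) (x, y) (Pi.single i 1, 0) (0, Pi.single j 1) := by
  rw [pd_congr (g := fun x' => fderiv ℝ f (x', y) (0, Pi.single j 1)) ?_ i]
  · exact pd_f1_left hf1 _ i
  · have : ∀ᶠ x' in nhds x, (x', y) ∈ S := by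
      have : Continuous fun x' : Fin k → ℝ => ((x', y) : (Fin k → ℝ) × (Fin k → ℝ)) :=
        continuous_id.prodMk continuous_const
      exact this.continuousAt.preimage_mem_nhds (hS.mem_nhds hp)
    filter_upwards [this] with x' hx' using pd_slice_right (hf _ hx') j

theorem pd_pd_yy (hS : IsOpen S) (hp : (x, y) ∈ S)
    (hf : ∀ q ∈ S, DifferentiableAt ℝ f q)
    (hf1 : DifferentiableAt ℝ (fderiv ℝ f) (x, y)) (i j : Fin k) :
    pd (fun y' => pd (fun y'' => f (x, y'')) j y') i y
      = fderiv ℝ (fderiv ℝ f) (x, y) (0, Pi.single i 1) (0, Pi.single j 1) := by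
  rw [pd_congr (g := fun y' => fderiv ℝ f (x, y') (0, Pi.single j 1)) ?_ i]
  · exact pd_f1_right hf1 _ i
  · have : ∀ᶠ y' in nhds y, (x, y') ∈ S := by
      have : Continuous fun y' : Fin k → ℝ => ((x, y') : (Fin k → ℝ) × (Fin k → ℝ)) :=
        continuous_const.prodMk continuous_id
      exact this.continuousAt.preimage_mem_nhds (hS.mem_nhds hp)
    filter_upwards [this] with y' hy' using pd_slice_right (hf _ hy') j

end Second

-- differentiability from ContDiffOn ⊤ on open sets
theorem diffAt_of_contDiffOn_top {E' F' : Type*} [NormedAddCommGroup E'] [NormedSpace ℝ E']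
    [NormedAddCommGroup F'] [NormedSpace ℝ F'] {f : E' → F'} {S : Set E'} (hS : IsOpen S)
    (h : ContDiffOn ℝ (⊤ : ℕ∞) f S) {q : E'} (hq : q ∈ S) : DifferentiableAt ℝ f q :=
  (h.contDiffAt (hS.mem_nhds hq)).differentiableAt (by simp)

theorem fderiv_diffAt_of_contDiffOn_top {E' F' : Type*} [NormedAddCommGroup E'] [NormedSpace ℝ E']
    [NormedAddCommGroup F'] [NormedSpace ℝ F'] {f : E' → F'} {S : Set E'} (hS : IsOpen S)
    (h : ContDiffOn ℝ (⊤ : ℕ∞) f S) {q : E'} (hq : q ∈ S) :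
    DifferentiableAt ℝ (fderiv ℝ f) q := by
  have h' : ContDiffOn ℝ ∞ f S := h.of_le (by simp)
  rw [contDiffOn_infty_iff_fderiv_of_isOpen hS] at h'
  exact (h'.2.contDiffAt (hS.mem_nhds hq)).differentiableAt (by simp)

-- derivative of quadratic form in y
theorem pd_quad_y {k : ℕ} (A : Matrix (Fin k) (Fin k) ℝ) (y : Fin k → ℝ) (m : Fin k) :
    pd (fun y' => ∑ i, ∑ j, A i j * y' i * y' j) m y
      = (∑ j, A m j * y j) + ∑ i, A i m * y i := by
  let P : Fin k → (Fin k → ℝ) →L[ℝ] ℝ := fun i => ContinuousLinearMap.proj i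
  have base : ∀ i : Fin k, HasFDerivAt (fun y' : Fin k → ℝ => y' i) (P i) y :=
    fun i => by exact hasFDerivAt_apply i y
  have H : HasFDerivAt (fun y' : Fin k → ℝ => ∑ i, ∑ j, A i j * y' i * y' j)
      (∑ i : Fin k, ∑ j : Fin k, ((A i j * y i) • P j + (y j) • ((A i j) • P i))) y := by
    apply HasFDerivAt.fun_sum; intro i _
    apply HasFDerivAt.fun_sum; intro j _
    exact ((base i).const_mul (A i j)).mul (base j)
  rw [H.pd_eq m]
  simp only [ContinuousLinearMap.sum_apply, ContinuousLinearMap.add_apply,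
    ContinuousLinearMap.smul_apply, Pi.single_apply, P, ContinuousLinearMap.proj_apply,
    smul_eq_mul, mul_ite, mul_one, mul_zero]
  simp only [Finset.sum_add_distrib, Finset.sum_ite_eq', Finset.mem_univ, if_true]
  have h2 : (∑ x : Fin k, ∑ x_1 : Fin k, if x = m then y x_1 * A x x_1 else 0)
      = ∑ x_1 : Fin k, y x_1 * A m x_1 := by
    rw [Finset.sum_comm]
    simp
  rw [h2, add_comm]
  congr 1
  · exact Finset.sum_congr rfl fun j _ => by ring

-- derivative of quadratic form in x
theorem pd_quad_x {k : ℕ} {gt : (Fin k → ℝ) → Matrix (Fin k) (Fin k) ℝ} {U : Set (Fin k → ℝ)}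
    (hU : IsOpen U) (hgt : ∀ i j, ContDiffOn ℝ (⊤ : ℕ∞) (fun x => gt x i j) U)
    {x : Fin k → ℝ} (hx : x ∈ U) (y : Fin k → ℝ) (m : Fin k) :
    pd (fun x' => ∑ i, ∑ j, gt x' i j * y i * y j) m x
      = ∑ i, ∑ j, pd (fun x' => gt x' i j) m x * y i * y j := by
  have hd : ∀ i j, HasFDerivAt (fun x' => gt x' i j)
      (fderiv ℝ (fun x' => gt x' i j) x) x := fun i j =>
    (diffAt_of_contDiffOn_top hU (hgt i j) hx).hasFDerivAt
  have H : HasFDerivAt (fun x' => ∑ i, ∑ j, gt x' i j * y i * y j)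
      (∑ i : Fin k, ∑ j : Fin k, (y j) • ((y i) • fderiv ℝ (fun x' => gt x' i j) x)) x := by
    apply HasFDerivAt.fun_sum; intro i _
    apply HasFDerivAt.fun_sum; intro j _
    exact ((hd i j).mul_const (y i)).mul_const (y j)
  rw [H.pd_eq m]
  simp only [ContinuousLinearMap.sum_apply, ContinuousLinearMap.smul_apply, smul_eq_mul, pd]
  congr 1; ext i; congr 1; ext j; ring

-- matrix inverse contraction
theorem inv_contract {k : ℕ} {M : Matrix (Fin k) (Fin k) ℝ} (h : M.det ≠ 0) (i m : Fin k) :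
    ∑ h', M⁻¹ i h' * M h' m = if i = m then 1 else 0 := by
  have := Matrix.nonsing_inv_mul M (by simpa using h)
  have := congrFun (congrFun this i) m
  rw [Matrix.mul_apply] at this
  rw [this, Matrix.one_apply]

theorem contract_inv {k : ℕ} {M : Matrix (Fin k) (Fin k) ℝ} (h : M.det ≠ 0) (i m : Fin k) :
    ∑ h', M i h' * M⁻¹ h' m = if i = m then 1 else 0 := by
  have := Matrix.mul_nonsing_inv M (by simpa using h)
  have := congrFun (congrFun this i) m
  rw [Matrix.mul_apply] at this
  rw [this, Matrix.one_apply]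
theorem metric_parallel {n : ℕ} {U : Set (Fin n → ℝ)}
    {gt : (Fin n → ℝ) → Matrix (Fin n) (Fin n) ℝ}
    (hg : IsRiemann U gt) (k : Fin n) {x : Fin n → ℝ} (hx : x ∈ U) (y : Fin n → ℝ) :
    rhder gt k (fun a c => ∑ i, ∑ j, gt a i j * c i * c j) x y = 0 := by
  have hdet : (gt x).det ≠ 0 := (hg.posdef x hx).det_pos.ne'
  have hsymU : ∀ x' ∈ U, ∀ i j, gt x' i j = gt x' j i := by
    intro x' hx' i j
    have := congrFun (congrFun (hg.symm x' hx') j) i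
    simpa [Matrix.transpose_apply] using this
  have hsym : ∀ i j, gt x i j = gt x j i := hsymU x hx
  set D : Fin n → Fin n → Fin n → ℝ := fun a b c => pd (fun x' => gt x' b c) a x with hD
  have hDsym : ∀ a b c, D a b c = D a c b := by
    intro a b c
    apply pd_congr
    filter_upwards [hg.isOpen.mem_nhds hx] with x' hx' using hsymU x' hx' b c
  have hcontr : ∀ j l, (∑ m, christ gt m k l x * gt x j m)
      = (1/2) * (D l j k + D k j l - D j k l) := by
    intro j l
    have step1 : ∑ m, christ gt m k l x * gt x j m
        = (1/2) * ∑ h, (∑ m, gt x j m * (gt x)⁻¹ m h)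
            * (D l h k + D k h l - D h k l) := by
      simp only [christ, Finset.sum_mul, Finset.mul_sum]
      rw [Finset.sum_comm]
      refine Finset.sum_congr rfl fun h _ => Finset.sum_congr rfl fun m _ => by
        simp only [hD]; ring
    rw [step1]
    have step2 : ∀ h, (∑ m, gt x j m * (gt x)⁻¹ m h) = if j = h then 1 else 0 :=
      fun h => contract_inv hdet j h
    simp only [step2, ite_mul, one_mul, zero_mul, Finset.sum_ite_eq, Finset.mem_univ, if_true]
  have hq : ∀ m, pd (fun y' => ∑ i, ∑ j, gt x i j * y' i * y' j) m y
      = (∑ j, gt x m j * y j) + ∑ i, gt x i m * y i := fun m => pd_quad_y (gt x) y m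
  simp only [rhder, hq]
  rw [pd_quad_x hg.isOpen hg.smooth hx]
  have h2 : ∀ m, ((∑ j, gt x m j * y j) + ∑ i, gt x i m * y i)
      = 2 * ∑ j, gt x j m * y j := by
    intro m
    rw [two_mul]
    congr 1
    exact Finset.sum_congr rfl fun j _ => by rw [hsym m j]
  simp only [h2]
  have hT2 : ∑ m, (∑ l, christ gt m k l x * y l) * (2 * ∑ j, gt x j m * y j)
      = ∑ j, ∑ l, (y j * y l) * (D l j k + D k j l - D j k l) := by
    have e1 : ∑ m, (∑ l, christ gt m k l x * y l) * (2 * ∑ j, gt x j m * y j)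
        = ∑ m, ∑ l, ∑ j, 2 * (christ gt m k l x * gt x j m) * (y l * y j) := by
      refine Finset.sum_congr rfl fun m _ => ?_
      rw [Finset.sum_mul]
      refine Finset.sum_congr rfl fun l _ => ?_
      rw [Finset.mul_sum, Finset.mul_sum]
      refine Finset.sum_congr rfl fun j _ => by ring
    rw [e1]
    rw [Finset.sum_comm]
    -- now ∑ l ∑ m ∑ j → want ∑ j ∑ l (...)
    have e2 : ∀ l, ∑ m, ∑ j, 2 * (christ gt m k l x * gt x j m) * (y l * y j)
        = ∑ j, (y j * y l) * (D l j k + D k j l - D j k l) := by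
      intro l
      rw [Finset.sum_comm]
      refine Finset.sum_congr rfl fun j _ => ?_
      have e3 : ∑ m, 2 * (christ gt m k l x * gt x j m) * (y l * y j)
          = 2 * (y l * y j) * ∑ m, christ gt m k l x * gt x j m := by
        rw [Finset.mul_sum]
        exact Finset.sum_congr rfl fun m _ => by ring
      rw [e3, hcontr j l]
      ring
    rw [Finset.sum_congr rfl fun l _ => e2 l, Finset.sum_comm]
  rw [hT2]
  have expand : ∑ j, ∑ l, (y j * y l) * (D l j k + D k j l - D j k l)
      = (∑ j, ∑ l, (y j * y l) * D l j k) + (∑ j, ∑ l, (y j * y l) * D k j l)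
        - ∑ j, ∑ l, (y j * y l) * D j k l := by
    rw [← Finset.sum_add_distrib, ← Finset.sum_sub_distrib]
    refine Finset.sum_congr rfl fun j _ => ?_
    rw [← Finset.sum_add_distrib, ← Finset.sum_sub_distrib]
    exact Finset.sum_congr rfl fun l _ => by ring
  rw [expand]
  have hac : (∑ j, ∑ l, (y j * y l) * D l j k) = ∑ j, ∑ l, (y j * y l) * D j k l := by
    rw [Finset.sum_comm]
    refine Finset.sum_congr rfl fun l _ => Finset.sum_congr rfl fun j _ => ?_
    rw [hDsym l j k]
    ring
  have hb : (∑ i, ∑ j, D k i j * y i * y j) = ∑ j, ∑ l, (y j * y l) * D k j l :=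
    Finset.sum_congr rfl fun i _ => Finset.sum_congr rfl fun j _ => by ring
  rw [hb, hac]
  ring
-- additional small pd lemmas
theorem pd_const {k : ℕ} (c : ℝ) (i : Fin k) (x : Fin k → ℝ) :
    pd (fun _ => c) i x = 0 := by
  simp [pd, fderiv_const]

theorem pd_sub {k : ℕ} {f g : (Fin k → ℝ) → ℝ} {x : Fin k → ℝ}
    (hf : DifferentiableAt ℝ f x) (hg : DifferentiableAt ℝ g x) (i : Fin k) :
    pd (fun t => f t - g t) i x = pd f i x - pd g i x := by
  simp [pd, fderiv_fun_sub hf hg]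

theorem pd_const_mul {k : ℕ} {f : (Fin k → ℝ) → ℝ} {x : Fin k → ℝ}
    (hf : DifferentiableAt ℝ f x) (a : ℝ) (i : Fin k) :
    pd (fun t => a * f t) i x = a * pd f i x := by
  simp [pd, fderiv_const_mul hf a]

theorem pd_linear {k : ℕ} (c : Fin k → ℝ) (j : Fin k) (y : Fin k → ℝ) :
    pd (fun y' => ∑ b, c b * y' b) j y = c j := by
  have H : HasFDerivAt (fun y' : Fin k → ℝ => ∑ b, c b * y' b)
      (∑ b : Fin k, c b • (ContinuousLinearMap.proj b : (Fin k → ℝ) →L[ℝ] ℝ)) y := by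
    apply HasFDerivAt.fun_sum
    intro b _
    exact (show HasFDerivAt (fun y' : Fin k → ℝ => y' b)
      (ContinuousLinearMap.proj b : (Fin k → ℝ) →L[ℝ] ℝ) y from by
        exact hasFDerivAt_apply b y).const_mul (c b)
  rw [H.pd_eq j]
  simp [Pi.single_apply]

theorem hasFDerivAt_quad_y {k : ℕ} (A : Matrix (Fin k) (Fin k) ℝ) (y : Fin k → ℝ) :
    DifferentiableAt ℝ (fun y' : Fin k → ℝ => ∑ i, ∑ j, A i j * y' i * y' j) y := by
  apply DifferentiableAt.fun_sum; intro i _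
  apply DifferentiableAt.fun_sum; intro j _
  have hb : ∀ a : Fin k, DifferentiableAt ℝ (fun y' : Fin k → ℝ => y' a) y :=
    fun a => (by exact hasFDerivAt_apply a y : HasFDerivAt _
      (ContinuousLinearMap.proj a : (Fin k → ℝ) →L[ℝ] ℝ) y).differentiableAt
  exact ((hb i).const_mul (A i j)).mul (hb j)

theorem diff_quad_x {k : ℕ} {gt : (Fin k → ℝ) → Matrix (Fin k) (Fin k) ℝ}
    {U : Set (Fin k → ℝ)} (hU : IsOpen U) (hgt : ∀ i j, ContDiffOn ℝ (⊤ : ℕ∞) (fun x => gt x i j) U)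
    {x : Fin k → ℝ} (hx : x ∈ U) (y : Fin k → ℝ) :
    DifferentiableAt ℝ (fun x' => ∑ i, ∑ j, gt x' i j * y i * y j) x := by
  apply DifferentiableAt.fun_sum; intro i _
  apply DifferentiableAt.fun_sum; intro j _
  exact ((diffAt_of_contDiffOn_top hU (hgt i j) hx).mul_const (y i)).mul_const (y j)

section Finsler
variable {n : ℕ} {U : Set (Fin n → ℝ)} {F : (Fin n → ℝ) → (Fin n → ℝ) → ℝ}

/-- The squared Finsler function as a function on the product space. -/
def PhiF (F : (Fin n → ℝ) → (Fin n → ℝ) → ℝ) : ((Fin n → ℝ) × (Fin n → ℝ)) → ℝ :=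
  fun p => (F p.1 p.2) ^ 2

theorem sOpen (hF : IsFinsler U F) : IsOpen (U ×ˢ {y : Fin n → ℝ | y ≠ 0}) :=
  hF.isOpen.prod isOpen_ne

theorem phiSmooth (hF : IsFinsler U F) :
    ContDiffOn ℝ (⊤ : ℕ∞) (PhiF F) (U ×ˢ {y : Fin n → ℝ | y ≠ 0}) :=
  hF.smooth.pow 2

theorem phiDiff (hF : IsFinsler U F) {x y : Fin n → ℝ} (hx : x ∈ U) (hy : y ≠ 0) :
    DifferentiableAt ℝ (PhiF F) (x, y) :=
  diffAt_of_contDiffOn_top (sOpen hF) (phiSmooth hF) ⟨hx, hy⟩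

theorem phiDiff1 (hF : IsFinsler U F) {x y : Fin n → ℝ} (hx : x ∈ U) (hy : y ≠ 0) :
    DifferentiableAt ℝ (fderiv ℝ (PhiF F)) (x, y) :=
  fderiv_diffAt_of_contDiffOn_top (sOpen hF) (phiSmooth hF) ⟨hx, hy⟩

theorem phiDiffAll (hF : IsFinsler U F) :
    ∀ q ∈ U ×ˢ {y : Fin n → ℝ | y ≠ 0}, DifferentiableAt ℝ (PhiF F) q :=
  fun _ hq => diffAt_of_contDiffOn_top (sOpen hF) (phiSmooth hF) hq

theorem pdx_F2 (hF : IsFinsler U F) {x y : Fin n → ℝ} (hx : x ∈ U) (hy : y ≠ 0) (k : Fin n) :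
    pd (fun x' => (F x' y) ^ 2) k x = fderiv ℝ (PhiF F) (x, y) (Pi.single k 1, 0) :=
  pd_slice_left (phiDiff hF hx hy) k

theorem pdy_F2 (hF : IsFinsler U F) {x y : Fin n → ℝ} (hx : x ∈ U) (hy : y ≠ 0) (h : Fin n) :
    pd (fun y' => (F x y') ^ 2) h y = fderiv ℝ (PhiF F) (x, y) (0, Pi.single h 1) :=
  pd_slice_right (phiDiff hF hx hy) h

theorem yLow_eq (hF : IsFinsler U F) {x y : Fin n → ℝ} (hx : x ∈ U) (hy : y ≠ 0) (h : Fin n) :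
    yLow F h x y = (1 / 2) * fderiv ℝ (PhiF F) (x, y) (0, Pi.single h 1) := by
  rw [yLow, pdy_F2 hF hx hy h]

theorem gF_eq (hF : IsFinsler U F) {x y : Fin n → ℝ} (hx : x ∈ U) (hy : y ≠ 0) (i j : Fin n) :
    gF F i j x y
      = (1 / 2) * fderiv ℝ (fderiv ℝ (PhiF F)) (x, y) (0, Pi.single i 1) (0, Pi.single j 1) := by
  rw [gF]
  congr 1
  exact pd_pd_yy (sOpen hF) ⟨hx, hy⟩ (phiDiffAll hF) (phiDiff1 hF hx hy) i j

theorem pdpd_xy (hF : IsFinsler U F) {x y : Fin n → ℝ} (hx : x ∈ U) (hy : y ≠ 0) (k h : Fin n) :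
    pd (fun x' => pd (fun y'' => (F x' y'') ^ 2) h y) k x
      = fderiv ℝ (fderiv ℝ (PhiF F)) (x, y) (Pi.single k 1, 0) (0, Pi.single h 1) :=
  pd_pd_xy (sOpen hF) ⟨hx, hy⟩ (phiDiffAll hF) (phiDiff1 hF hx hy) k h

theorem f2symm (hF : IsFinsler U F) {x y : Fin n → ℝ} (hx : x ∈ U) (hy : y ≠ 0)
    (v w : (Fin n → ℝ) × (Fin n → ℝ)) :
    fderiv ℝ (fderiv ℝ (PhiF F)) (x, y) v w = fderiv ℝ (fderiv ℝ (PhiF F)) (x, y) w v :=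
  f2_symm (sOpen hF) ⟨hx, hy⟩ (phiDiffAll hF) (phiDiff1 hF hx hy) v w

variable {gt : (Fin n → ℝ) → Matrix (Fin n) (Fin n) ℝ} {b : (Fin n → ℝ) → (Fin n → ℝ) → ℝ}

/-- Claim 1: `(F²)_{||k} = 0`. -/
theorem claim1 (hF : IsFinsler U F) (hg : IsRiemann U gt)
    (hb : b = fun x y => (F x y) ^ 2 - ∑ i, ∑ j, gt x i j * y i * y j)
    (hpar : ∀ k : Fin n, ∀ x ∈ U, ∀ y : Fin n → ℝ, y ≠ 0 → rhder gt k b x y = 0)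
    (k : Fin n) {x y : Fin n → ℝ} (hx : x ∈ U) (hy : y ≠ 0) :
    rhder gt k (fun a c => (F a c) ^ 2) x y = 0 := by
  have hb0 := hpar k x hx y hy
  have hm0 := metric_parallel hg k hx y
  rw [hb] at hb0
  have hdx1 : DifferentiableAt ℝ (fun x' => (F x' y) ^ 2) x :=
    by have := (phiDiff hF hx hy).comp x ((differentiableAt_id (𝕜 := ℝ)).prodMk (differentiableAt_const y)); exact this
  have hdx2 : DifferentiableAt ℝ (fun x' => ∑ i, ∑ j, gt x' i j * y i * y j) x :=
    diff_quad_x hg.isOpen hg.smooth hx y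
  have hdy1 : ∀ y₀ : Fin n → ℝ, y₀ ≠ 0 → DifferentiableAt ℝ (fun y' => (F x y') ^ 2) y₀ :=
    fun y₀ hy₀ =>
      (phiDiff hF hx hy₀).comp y₀ ((differentiableAt_const x).prodMk differentiableAt_id)
  have hdy2 : ∀ y₀ : Fin n → ℝ,
      DifferentiableAt ℝ (fun y' : Fin n → ℝ => ∑ i, ∑ j, gt x i j * y' i * y' j) y₀ :=
    fun y₀ => hasFDerivAt_quad_y (gt x) y₀
  have hsplit : rhder gt k (fun a c => (F a c) ^ 2 - ∑ i, ∑ j, gt a i j * c i * c j) x y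
      = rhder gt k (fun a c => (F a c) ^ 2) x y
        - rhder gt k (fun a c => ∑ i, ∑ j, gt a i j * c i * c j) x y := by
    simp only [rhder]
    rw [pd_sub hdx1 hdx2 k]
    have : ∀ m : Fin n, pd (fun y' => (F x y') ^ 2 - ∑ i, ∑ j, gt x i j * y' i * y' j) m y
        = pd (fun y' => (F x y') ^ 2) m y
          - pd (fun y' : Fin n → ℝ => ∑ i, ∑ j, gt x i j * y' i * y' j) m y :=
      fun m => pd_sub (hdy1 y hy) (hdy2 y) m
    simp only [this, mul_sub, Finset.sum_sub_distrib]
    ring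
  rw [hsplit, hm0, sub_zero] at hb0
  exact hb0
end Finsler
theorem hasFDerivAt_f1_right {k : ℕ} {f : ((Fin k → ℝ) × (Fin k → ℝ)) → ℝ} {x y : Fin k → ℝ}
    (h : DifferentiableAt ℝ (fderiv ℝ f) (x, y)) (v : (Fin k → ℝ) × (Fin k → ℝ)) :
    HasFDerivAt (fun y' => fderiv ℝ f (x, y') v)
      ((ContinuousLinearMap.apply ℝ ℝ v).comp
        ((fderiv ℝ (fderiv ℝ f) (x, y)).comp
          (ContinuousLinearMap.inr ℝ (Fin k → ℝ) (Fin k → ℝ)))) y := by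
  have h1 := h.hasFDerivAt.comp y (hasFDerivAt_prodMk_right x y)
  have h2 := (ContinuousLinearMap.apply ℝ ℝ v).hasFDerivAt.comp y h1
  rw [← ContinuousLinearMap.comp_assoc] at h2
  exact h2

section Finsler2
variable {n : ℕ} {U : Set (Fin n → ℝ)} {F : (Fin n → ℝ) → (Fin n → ℝ) → ℝ}
  {gt : (Fin n → ℝ) → Matrix (Fin n) (Fin n) ℝ} {b : (Fin n → ℝ) → (Fin n → ℝ) → ℝ}

theorem star (hF : IsFinsler U F) (hg : IsRiemann U gt)
    (hb : b = fun x y => (F x y) ^ 2 - ∑ i, ∑ j, gt x i j * y i * y j)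
    (hpar : ∀ k : Fin n, ∀ x ∈ U, ∀ y : Fin n → ℝ, y ≠ 0 → rhder gt k b x y = 0)
    (k : Fin n) {x y : Fin n → ℝ} (hx : x ∈ U) (hy : y ≠ 0) :
    fderiv ℝ (PhiF F) (x, y) (Pi.single k 1, 0)
      = ∑ m, (∑ l, christ gt m k l x * y l) * fderiv ℝ (PhiF F) (x, y) (0, Pi.single m 1) := by
  have h0 := claim1 hF hg hb hpar k hx hy
  simp only [rhder] at h0
  rw [pdx_F2 hF hx hy k] at h0
  have : ∀ m : Fin n, pd (fun y' => (F x y') ^ 2) m y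
      = fderiv ℝ (PhiF F) (x, y) (0, Pi.single m 1) := fun m => pdy_F2 hF hx hy m
  simp only [this] at h0
  linarith [h0]

theorem doublestar (hF : IsFinsler U F) (hg : IsRiemann U gt)
    (hb : b = fun x y => (F x y) ^ 2 - ∑ i, ∑ j, gt x i j * y i * y j)
    (hpar : ∀ k : Fin n, ∀ x ∈ U, ∀ y : Fin n → ℝ, y ≠ 0 → rhder gt k b x y = 0)
    (k h : Fin n) {x y : Fin n → ℝ} (hx : x ∈ U) (hy : y ≠ 0) :
    fderiv ℝ (fderiv ℝ (PhiF F)) (x, y) (Pi.single k 1, 0) (0, Pi.single h 1)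
      = ∑ m, (christ gt m k h x * fderiv ℝ (PhiF F) (x, y) (0, Pi.single m 1)
          + (∑ l, christ gt m k l x * y l)
            * fderiv ℝ (fderiv ℝ (PhiF F)) (x, y) (0, Pi.single h 1) (0, Pi.single m 1)) := by
  set φ : (Fin n → ℝ) → ℝ := fun y' =>
    fderiv ℝ (PhiF F) (x, y') (Pi.single k 1, 0)
      - ∑ m, (∑ l, christ gt m k l x * y' l) * fderiv ℝ (PhiF F) (x, y') (0, Pi.single m 1)
    with hφ
  have hev : φ =ᶠ[nhds y] fun _ => (0 : ℝ) := by
    filter_upwards [isOpen_ne.mem_nhds hy] with y' hy'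
    exact sub_eq_zero.mpr (star hF hg hb hpar k hx hy')
  have h0 : pd φ h y = 0 := by rw [pd_congr hev h, pd_const]
  have hd1 := phiDiff1 hF hx hy
  set LA := (ContinuousLinearMap.apply ℝ ℝ ((Pi.single k 1, 0) : (Fin n → ℝ) × (Fin n → ℝ))).comp
        ((fderiv ℝ (fderiv ℝ (PhiF F)) (x, y)).comp
          (ContinuousLinearMap.inr ℝ (Fin n → ℝ) (Fin n → ℝ))) with hLA
  set LB : Fin n → (Fin n → ℝ) →L[ℝ] ℝ := fun m =>
    (ContinuousLinearMap.apply ℝ ℝ ((0, Pi.single m 1) : (Fin n → ℝ) × (Fin n → ℝ))).comp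
        ((fderiv ℝ (fderiv ℝ (PhiF F)) (x, y)).comp
          (ContinuousLinearMap.inr ℝ (Fin n → ℝ) (Fin n → ℝ))) with hLB
  set Lc : Fin n → (Fin n → ℝ) →L[ℝ] ℝ := fun m =>
    ∑ l, christ gt m k l x • (ContinuousLinearMap.proj l : (Fin n → ℝ) →L[ℝ] ℝ) with hLc
  have hA : HasFDerivAt (fun y' => fderiv ℝ (PhiF F) (x, y') (Pi.single k 1, 0)) LA y :=
    hasFDerivAt_f1_right hd1 _
  have hB : ∀ m, HasFDerivAt
      (fun y' => fderiv ℝ (PhiF F) (x, y') (0, Pi.single m 1)) (LB m) y :=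
    fun m => hasFDerivAt_f1_right hd1 _
  have hc : ∀ m, HasFDerivAt (fun y' : Fin n → ℝ => ∑ l, christ gt m k l x * y' l) (Lc m) y := by
    intro m
    apply HasFDerivAt.fun_sum
    intro l _
    exact (show HasFDerivAt (fun y' : Fin n → ℝ => y' l)
      (ContinuousLinearMap.proj l : (Fin n → ℝ) →L[ℝ] ℝ) y from by
        exact hasFDerivAt_apply l y).const_mul (christ gt m k l x)
  have H : HasFDerivAt φ
      (LA - ∑ m : Fin n, ((∑ l, christ gt m k l x * y l) • (LB m)
        + (fderiv ℝ (PhiF F) (x, y) (0, Pi.single m 1)) • (Lc m))) y := by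
    exact hA.sub (HasFDerivAt.fun_sum fun m _ => (hc m).mul (hB m))
  have hval := H.pd_eq h
  rw [h0] at hval
  have hLAval : LA (Pi.single h 1)
      = fderiv ℝ (fderiv ℝ (PhiF F)) (x, y) (0, Pi.single h 1) (Pi.single k 1, 0) := rfl
  have hLBval : ∀ m, LB m (Pi.single h 1)
      = fderiv ℝ (fderiv ℝ (PhiF F)) (x, y) (0, Pi.single h 1) (0, Pi.single m 1) := fun m => rfl
  have hLcval : ∀ m, Lc m (Pi.single h 1) = christ gt m k h x := by
    intro m
    simp only [hLc, ContinuousLinearMap.sum_apply, ContinuousLinearMap.smul_apply,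
      ContinuousLinearMap.proj_apply, Pi.single_apply, smul_eq_mul, mul_ite, mul_one, mul_zero]
    simp
  simp only [ContinuousLinearMap.sub_apply, ContinuousLinearMap.sum_apply,
    ContinuousLinearMap.add_apply, ContinuousLinearMap.smul_apply, smul_eq_mul,
    hLAval, hLBval, hLcval] at hval
  rw [f2symm hF hx hy (0, Pi.single h 1) (Pi.single k 1, 0)] at hval
  have := sub_eq_zero.mp (hval.symm)
  rw [this]
  exact Finset.sum_congr rfl fun m _ => by ring
end Finsler2
theorem hasFDerivAt_f1_left {k : ℕ} {f : ((Fin k → ℝ) × (Fin k → ℝ)) → ℝ} {x y : Fin k → ℝ}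
    (h : DifferentiableAt ℝ (fderiv ℝ f) (x, y)) (v : (Fin k → ℝ) × (Fin k → ℝ)) :
    HasFDerivAt (fun x' => fderiv ℝ f (x', y) v)
      ((ContinuousLinearMap.apply ℝ ℝ v).comp
        ((fderiv ℝ (fderiv ℝ f) (x, y)).comp
          (ContinuousLinearMap.inl ℝ (Fin k → ℝ) (Fin k → ℝ)))) x := by
  have h1 := h.hasFDerivAt.comp x (hasFDerivAt_prodMk_left (𝕜 := ℝ) x y)
  have h2 := (ContinuousLinearMap.apply ℝ ℝ v).hasFDerivAt.comp x h1
  rw [← ContinuousLinearMap.comp_assoc] at h2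
  exact h2

section Finsler3
variable {n : ℕ} {U : Set (Fin n → ℝ)} {F : (Fin n → ℝ) → (Fin n → ℝ) → ℝ}
  {gt : (Fin n → ℝ) → Matrix (Fin n) (Fin n) ℝ} {b : (Fin n → ℝ) → (Fin n → ℝ) → ℝ}

theorem christ_symm (hg : IsRiemann U gt) {x : Fin n → ℝ} (hx : x ∈ U) (i a c : Fin n) :
    christ gt i a c x = christ gt i c a x := by
  simp only [christ]
  congr 1
  refine Finset.sum_congr rfl fun h _ => ?_
  have hpd : pd (fun x' => gt x' a c) h x = pd (fun x' => gt x' c a) h x := by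
    apply pd_congr
    filter_upwards [hg.isOpen.mem_nhds hx] with x' hx'
    have := congrFun (congrFun (hg.symm x' hx') c) a
    simpa [Matrix.transpose_apply] using this
  rw [hpd]
  ring

theorem claim2a (hF : IsFinsler U F) (hg : IsRiemann U gt)
    (hb : b = fun x y => (F x y) ^ 2 - ∑ i, ∑ j, gt x i j * y i * y j)
    (hpar : ∀ k : Fin n, ∀ x ∈ U, ∀ y : Fin n → ℝ, y ≠ 0 → rhder gt k b x y = 0)
    (h j : Fin n) {x y : Fin n → ℝ} (hx : x ∈ U) (hy : y ≠ 0) :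
    rhder gt j (yLow F h) x y = ∑ m, christ gt m j h x * yLow F m x y := by
  have hd1 := phiDiff1 hF hx hy
  simp only [rhder, yLow]
  have e1 : pd (fun x' => (1:ℝ)/2 * pd (fun y' => (F x' y') ^ 2) h y) j x
      = (1/2) * fderiv ℝ (fderiv ℝ (PhiF F)) (x, y) (Pi.single j 1, 0) (0, Pi.single h 1) := by
    rw [pd_congr (g := fun x' => (1:ℝ)/2 * fderiv ℝ (PhiF F) (x', y) (0, Pi.single h 1)) ?_ j]
    · exact ((hasFDerivAt_f1_left hd1 (0, Pi.single h 1)).const_mul ((1:ℝ)/2)).pd_eq j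
    · have hU : ∀ᶠ x' in nhds x, x' ∈ U := hF.isOpen.mem_nhds hx
      filter_upwards [hU] with x' hx'
      rw [pdy_F2 hF hx' hy h]
  have e2 : ∀ m, pd (fun y' => (1:ℝ)/2 * pd (fun y'' => (F x y'') ^ 2) h y') m y
      = (1/2) * fderiv ℝ (fderiv ℝ (PhiF F)) (x, y) (0, Pi.single m 1) (0, Pi.single h 1) := by
    intro m
    rw [pd_congr (g := fun y' => (1:ℝ)/2 * fderiv ℝ (PhiF F) (x, y') (0, Pi.single h 1)) ?_ m]
    · exact ((hasFDerivAt_f1_right hd1 (0, Pi.single h 1)).const_mul ((1:ℝ)/2)).pd_eq m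
    · filter_upwards [isOpen_ne.mem_nhds hy] with y' hy'
      rw [pdy_F2 hF hx hy' h]
  rw [e1]
  simp only [e2]
  rw [doublestar hF hg hb hpar j h hx hy]
  have e3 : ∀ m, fderiv ℝ (fderiv ℝ (PhiF F)) (x, y) (0, Pi.single m 1) (0, Pi.single h 1)
      = fderiv ℝ (fderiv ℝ (PhiF F)) (x, y) (0, Pi.single h 1) (0, Pi.single m 1) :=
    fun m => f2symm hF hx hy _ _
  simp only [e3]
  have e4 : ∀ m, yLow F m x y = (1/2) * fderiv ℝ (PhiF F) (x, y) (0, Pi.single m 1) :=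
    fun m => yLow_eq hF hx hy m
  have e5 : ∀ m : Fin n, pd (fun y' => (F x y') ^ 2) m y
      = fderiv ℝ (PhiF F) (x, y) (0, Pi.single m 1) := fun m => pdy_F2 hF hx hy m
  simp only [e5]
  rw [Finset.mul_sum, ← Finset.sum_sub_distrib]
  refine Finset.sum_congr rfl fun m _ => by ring

theorem claim2b (hF : IsFinsler U F) (hg : IsRiemann U gt)
    (hb : b = fun x y => (F x y) ^ 2 - ∑ i, ∑ j, gt x i j * y i * y j)
    (hpar : ∀ k : Fin n, ∀ x ∈ U, ∀ y : Fin n → ℝ, y ≠ 0 → rhder gt k b x y = 0)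
    (h j : Fin n) {x y : Fin n → ℝ} (hx : x ∈ U) (hy : y ≠ 0) :
    yLowCov F gt h j x y = 0 := by
  rw [yLowCov, claim2a hF hg hb hpar h j hx hy]
  rw [← Finset.sum_sub_distrib]
  refine Finset.sum_eq_zero fun m _ => ?_
  rw [christ_symm hg hx m j h]
  ring

theorem claim2c (hF : IsFinsler U F) (hg : IsRiemann U gt)
    (hb : b = fun x y => (F x y) ^ 2 - ∑ i, ∑ j, gt x i j * y i * y j)
    (hpar : ∀ k : Fin n, ∀ x ∈ U, ∀ y : Fin n → ℝ, y ≠ 0 → rhder gt k b x y = 0)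
    (i : Fin n) {x y : Fin n → ℝ} (hx : x ∈ U) (hy : y ≠ 0) :
    bCoef F gt i x y = 0 := by
  rw [bCoef]
  have hz : ∀ h : Fin n, gInv F i h x y
      * (2 * (∑ j, yLowCov F gt h j x y * y j)
        - rhder gt h (fun a c => (F a c) ^ 2) x y) = 0 := by
    intro h
    rw [claim1 hF hg hb hpar h hx hy]
    have hy0 : ∀ j, yLowCov F gt h j x y = 0 := fun j => claim2b hF hg hb hpar h j hx hy
    simp [hy0]
  rw [Finset.sum_congr rfl fun h _ => hz h]
  simp

theorem claim3 (hF : IsFinsler U F) (hg : IsRiemann U gt)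
    (hb : b = fun x y => (F x y) ^ 2 - ∑ i, ∑ j, gt x i j * y i * y j)
    (hpar : ∀ k : Fin n, ∀ x ∈ U, ∀ y : Fin n → ℝ, y ≠ 0 → rhder gt k b x y = 0)
    (i : Fin n) {x y : Fin n → ℝ} (hx : x ∈ U) (hy : y ≠ 0) :
    spray F i x y = gTildeSpray gt i x y := by
  have hdetF : (gMat F x y).det ≠ 0 := (hF.posdef x hx y hy).det_pos.ne'
  rw [spray]
  have e0 : ∀ h : Fin n, ∀ k : Fin n,
      pd (fun x' => pd (fun y' => (F x' y') ^ 2) h y) k x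
        = fderiv ℝ (fderiv ℝ (PhiF F)) (x, y) (Pi.single k 1, 0) (0, Pi.single h 1) :=
    fun h k => pdpd_xy hF hx hy k h
  have egts : ∀ m, (∑ k, (∑ l, christ gt m k l x * y l) * y k) = 2 * gTildeSpray gt m x y := by
    intro m
    rw [gTildeSpray]
    rw [show (2:ℝ) * ((1/2) * ∑ j, ∑ k, christ gt m j k x * y j * y k)
      = ∑ j, ∑ k, christ gt m j k x * y j * y k by ring]
    refine Finset.sum_congr rfl fun k _ => ?_
    rw [Finset.sum_mul]
    exact Finset.sum_congr rfl fun l _ => by ring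
  have ebracket : ∀ h : Fin n,
      (∑ k, pd (fun x' => pd (fun y' => (F x' y') ^ 2) h y) k x * y k)
        - pd (fun x' => (F x' y) ^ 2) h x
      = ∑ m, 4 * gF F h m x y * gTildeSpray gt m x y := by
    intro h
    have eA : ∀ k : Fin n, pd (fun x' => pd (fun y' => (F x' y') ^ 2) h y) k x * y k
        = ∑ m, (christ gt m k h x * fderiv ℝ (PhiF F) (x, y) (0, Pi.single m 1)
            + (∑ l, christ gt m k l x * y l)
              * fderiv ℝ (fderiv ℝ (PhiF F)) (x, y) (0, Pi.single h 1) (0, Pi.single m 1)) * y k := by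
      intro k
      rw [e0 h k, doublestar hF hg hb hpar k h hx hy, Finset.sum_mul]
    simp only [eA]
    rw [pdx_F2 hF hx hy h, star hF hg hb hpar h hx hy]
    rw [Finset.sum_comm]
    rw [← Finset.sum_sub_distrib]
    refine Finset.sum_congr rfl fun m _ => ?_
    have s1 : ∑ k, (christ gt m k h x * fderiv ℝ (PhiF F) (x, y) (0, Pi.single m 1)
          + (∑ l, christ gt m k l x * y l)
            * fderiv ℝ (fderiv ℝ (PhiF F)) (x, y) (0, Pi.single h 1) (0, Pi.single m 1)) * y k
        = (∑ k, christ gt m h k x * y k) * fderiv ℝ (PhiF F) (x, y) (0, Pi.single m 1)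
          + (∑ k, (∑ l, christ gt m k l x * y l) * y k)
            * fderiv ℝ (fderiv ℝ (PhiF F)) (x, y) (0, Pi.single h 1) (0, Pi.single m 1) := by
      rw [Finset.sum_mul, Finset.sum_mul, ← Finset.sum_add_distrib]
      refine Finset.sum_congr rfl fun k _ => ?_
      rw [christ_symm hg hx m h k]
      ring
    rw [s1, egts m]
    have s2 : fderiv ℝ (fderiv ℝ (PhiF F)) (x, y) (0, Pi.single h 1) (0, Pi.single m 1)
        = 2 * gF F h m x y := by
      rw [gF_eq hF hx hy h m]
      ring
    rw [s2]
    ring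
  simp only [ebracket]
  have final : (1/4 : ℝ) * ∑ h, gInv F i h x y * ∑ m, 4 * gF F h m x y * gTildeSpray gt m x y
      = ∑ m, (∑ h, gInv F i h x y * gF F h m x y) * gTildeSpray gt m x y :=
    calc (1/4 : ℝ) * ∑ h, gInv F i h x y * ∑ m, 4 * gF F h m x y * gTildeSpray gt m x y
        = ∑ h, ∑ m, (gInv F i h x y * gF F h m x y) * gTildeSpray gt m x y := by
          rw [Finset.mul_sum]
          refine Finset.sum_congr rfl fun h _ => ?_
          rw [Finset.mul_sum, Finset.mul_sum]
          exact Finset.sum_congr rfl fun m _ => by ring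
      _ = ∑ m, (∑ h, gInv F i h x y * gF F h m x y) * gTildeSpray gt m x y := by
          rw [Finset.sum_comm]
          exact Finset.sum_congr rfl fun m _ => (Finset.sum_mul _ _ _).symm
  rw [final]
  have hcontr : ∀ m, (∑ h, gInv F i h x y * gF F h m x y) = if i = m then 1 else 0 := by
    intro m
    have := inv_contract hdetF i m
    simpa [gInv, gMat] using this
  simp only [hcontr, ite_mul, one_mul, zero_mul, Finset.sum_ite_eq, Finset.mem_univ, if_true]

theorem claim4 (hF : IsFinsler U F) (hg : IsRiemann U gt)
    (hb : b = fun x y => (F x y) ^ 2 - ∑ i, ∑ j, gt x i j * y i * y j)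
    (hpar : ∀ k : Fin n, ∀ x ∈ U, ∀ y : Fin n → ℝ, y ≠ 0 → rhder gt k b x y = 0)
    (i j k : Fin n) {x y : Fin n → ℝ} (hx : x ∈ U) (hy : y ≠ 0) :
    sprayH F i j k x y = christ gt i j k x := by
  have hinner : ∀ y' : Fin n → ℝ, y' ≠ 0 →
      pd (fun y'' => spray F i x y'') k y' = ∑ c, christ gt i k c x * y' c := by
    intro y' hy'
    have hev : (fun y'' => spray F i x y'') =ᶠ[nhds y']
        fun y'' => ∑ a, ∑ c, ((1/2 : ℝ) * christ gt i a c x) * y'' a * y'' c := by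
      filter_upwards [isOpen_ne.mem_nhds hy'] with y'' hy''
      rw [claim3 hF hg hb hpar i hx hy'', gTildeSpray, Finset.mul_sum]
      refine Finset.sum_congr rfl fun a _ => ?_
      rw [Finset.mul_sum]
      exact Finset.sum_congr rfl fun c _ => by ring
    rw [pd_congr hev k]
    have hq : pd (fun y'' => ∑ a, ∑ c, ((1/2 : ℝ) * christ gt i a c x) * y'' a * y'' c) k y'
        = (∑ c, Matrix.of (fun a c => (1/2 : ℝ) * christ gt i a c x) k c * y' c)
          + ∑ a, Matrix.of (fun a c => (1/2 : ℝ) * christ gt i a c x) a k * y' a := by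
      exact pd_quad_y _ y' k
    rw [hq]
    simp only [Matrix.of_apply]
    rw [← Finset.sum_add_distrib]
    refine Finset.sum_congr rfl fun c _ => ?_
    rw [christ_symm hg hx i c k]
    ring
  rw [sprayH]
  have hev2 : (fun y' => pd (fun y'' => spray F i x y'') k y') =ᶠ[nhds y]
      fun y' => ∑ c, christ gt i k c x * y' c := by
    filter_upwards [isOpen_ne.mem_nhds hy] with y' hy' using hinner y' hy'
  rw [pd_congr hev2 j, pd_linear (fun c => christ gt i k c x) j y]
  exact christ_symm hg hx i k j
end Finsler3

/-- if `b := F² − F̃²` satisfies `δ̃_k b = 0` on `U × (ℝⁿ∖{0})` for all `k`,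
then `(F²)_{||k} = 0`, `B^i = 0`, `G^i = G̃^i`, and the tension
`τ^i = g^{jk}( γ̃^i_{jk} − G^i_{jk} )` of the identity map vanishes identically:
the identity is harmonic. -/
theorem identity_harmonic_of_parallel_perturbation {n : ℕ} (hn : 1 ≤ n)
    (U : Set (Fin n → ℝ)) (F : (Fin n → ℝ) → (Fin n → ℝ) → ℝ) (hF : IsFinsler U F)
    (gt : (Fin n → ℝ) → Matrix (Fin n) (Fin n) ℝ) (hg : IsRiemann U gt)
    (b : (Fin n → ℝ) → (Fin n → ℝ) → ℝ)
    (hb : b = fun x y => (F x y) ^ 2 - ∑ i, ∑ j, gt x i j * y i * y j)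
    (hpar : ∀ k : Fin n, ∀ x ∈ U, ∀ y : Fin n → ℝ, y ≠ 0 → rhder gt k b x y = 0) :
    ∀ x ∈ U, ∀ y : Fin n → ℝ, y ≠ 0 →
      (∀ k : Fin n, rhder gt k (fun a c => (F a c) ^ 2) x y = 0) ∧
      (∀ i : Fin n, bCoef F gt i x y = 0) ∧
      (∀ i : Fin n, spray F i x y = gTildeSpray gt i x y) ∧
      (∀ i : Fin n,
        ∑ j, ∑ k, gInv F j k x y * (christ gt i j k x - sprayH F i j k x y) = 0) := by
  intro x hx y hy
  refine ⟨fun k => claim1 hF hg hb hpar k hx hy,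
    fun i => claim2c hF hg hb hpar i hx hy,
    fun i => claim3 hF hg hb hpar i hx hy,
    fun i => ?_⟩
  refine Finset.sum_eq_zero fun j _ => Finset.sum_eq_zero fun k _ => ?_
  rw [claim4 hF hg hb hpar i j k hx hy]
  simp
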